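/- Suppose AᵀA ≠ 0, β > 0, 0 < α < 2/(λ₁ + β), and the step-size is chosen as δ = 2/(λ₁/(λ₁+β) + λ_r/(λ_r+β)) (this δ satisfies 0 < δ < 2(λ₁+β)/λ₁). Then there exists a real number ρ with ϱ ≤ ρ < 1 such that for every iteration t ≥ 0, ‖g(t+1)‖ ≤ (μ* + δ λ₁ ‖K(0) − K_β‖_F · ρ^{t+1}) · ‖g(t)‖. -/

import Mathlib

open Matrix Finset

/-- Euclidean norm of a vector in `ℝ^d`. -/
noncomputable def euclNorm {d : ℕ} (v : Fin d → ℝ) : ℝ :=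
  Real.sqrt (∑ i, v i ^ 2)

/-- Frobenius norm of a matrix. -/
noncomputable def frob {n d : ℕ} (M : Matrix (Fin n) (Fin d) ℝ) : ℝ :=
  Real.sqrt (∑ i, ∑ j, M i j ^ 2)

/-!
Write `φ f = V * diagonal f * Vᵀ` (`diagonalConj`), so that `AᵀA = φ λ`, and put `E = K(0) − K_β`.
The preconditioner error obeys `K(t) − K_β = (I − α(AᵀA + βI))^t E`, hence
`g(t+1) = φ(1 − δλ/(λ+β)) g(t) − δ φ(λ (1 − α(λ+β))^{t+1}) E g(t)`.
Since `g(t)` lies in the range of `Aᵀ`, it has no component along an eigenvector with `λ_j = 0`,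
so the first operator only acts through the factors `1 − δλ_j/(λ_j+β)` with `λ_r ≤ λ_j ≤ λ₁`;
the choice of `δ` centres these in `[−μ*, μ*]`. The second term is at most
`δ λ₁ ρ^{t+1} ‖E‖_F ‖g(t)‖` for `ρ = max(ϱ, |1 − α(λ₁+β)|, |1 − α(λ_d+β)|) < 1`.
-/

section Euclidean

variable {d : ℕ}

lemma euclNorm_eq_norm (v : Fin d → ℝ) : euclNorm v = ‖WithLp.toLp 2 v‖ := by
  simp [euclNorm, EuclideanSpace.norm_eq]

lemma euclNorm_sub_le (u v : Fin d → ℝ) : euclNorm (u - v) ≤ euclNorm u + euclNorm v := by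
  simpa only [euclNorm_eq_norm, WithLp.toLp_sub] using norm_sub_le _ _

lemma euclNorm_smul (a : ℝ) (v : Fin d → ℝ) : euclNorm (a • v) = |a| * euclNorm v := by
  simp only [euclNorm_eq_norm, WithLp.toLp_smul, norm_smul, Real.norm_eq_abs]

lemma euclNorm_le_iff {v : Fin d → ℝ} {c : ℝ} (hc : 0 ≤ c) :
    euclNorm v ≤ c ↔ ∑ i, v i ^ 2 ≤ c ^ 2 :=
  Real.sqrt_le_left hc

lemma euclNorm_nonneg (v : Fin d → ℝ) : 0 ≤ euclNorm v := Real.sqrt_nonneg _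

lemma sq_euclNorm (v : Fin d → ℝ) : euclNorm v ^ 2 = ∑ i, v i ^ 2 :=
  Real.sq_sqrt (by positivity)

lemma euclNorm_mulVec_of_transpose_mul_self {m : ℕ} {V : Matrix (Fin m) (Fin d) ℝ}
    (hV : Vᵀ * V = 1) (v : Fin d → ℝ) : euclNorm (V *ᵥ v) = euclNorm v := by
  have hdot : (V *ᵥ v) ⬝ᵥ (V *ᵥ v) = v ⬝ᵥ v := by
    rw [dotProduct_mulVec, ← mulVec_transpose, mulVec_mulVec, hV, one_mulVec, dotProduct_comm]
  simpa only [euclNorm, dotProduct, sq] using congrArg Real.sqrt hdot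

lemma euclNorm_diagonal_mulVec_le {w v : Fin d → ℝ} {m : ℝ} (hm : 0 ≤ m)
    (hw : ∀ j, v j ≠ 0 → |w j| ≤ m) : euclNorm (diagonal w *ᵥ v) ≤ m * euclNorm v := by
  rw [euclNorm_le_iff (mul_nonneg hm (euclNorm_nonneg v)), mul_pow, sq_euclNorm, Finset.mul_sum]
  refine Finset.sum_le_sum fun j _ => ?_
  rw [mulVec_diagonal, mul_pow]
  by_cases hv : v j = 0
  · simp [hv]
  · exact mul_le_mul_of_nonneg_right (sq_le_sq' (abs_le.mp (hw j hv)).1 (abs_le.mp (hw j hv)).2)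
      (sq_nonneg _)

lemma euclNorm_mulVec_le_frob {m : ℕ} (M : Matrix (Fin m) (Fin d) ℝ) (v : Fin d → ℝ) :
    euclNorm (M *ᵥ v) ≤ frob M * euclNorm v := by
  have hfrob : frob M ^ 2 = ∑ i, ∑ j, M i j ^ 2 := Real.sq_sqrt (by positivity)
  have hfrob_nonneg : 0 ≤ frob M := Real.sqrt_nonneg _
  rw [euclNorm_le_iff (mul_nonneg hfrob_nonneg (euclNorm_nonneg v)), mul_pow, hfrob,
    sq_euclNorm, Finset.sum_mul]
  exact Finset.sum_le_sum fun i _ => Finset.sum_mul_sq_le_sq_mul_sq univ (M i) v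

end Euclidean

lemma transpose_mulVec_apply_eq_zero {m n R : Type*} [Fintype m] [CommRing R] [LinearOrder R]
    [IsStrictOrderedRing R] {M : Matrix m n R} {j : n} (h : (Mᵀ * M) j j = 0) (y : m → R) :
    (Mᵀ *ᵥ y) j = 0 := by
  have hcol : (fun i => M i j) = 0 := dotProduct_self_eq_zero.mp h
  simp [mulVec, dotProduct, fun i => congrFun hcol i]

section DiagonalConj

variable {n R : Type*} [Fintype n] [DecidableEq n] [CommRing R] [StarRing R] [TrivialStar R]

noncomputable def diagonalConj (V : unitary (Matrix n n R)) : (n → R) →ₐ[R] Matrix n n R :=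
  ((Unitary.conjStarAlgAut R (Matrix n n R) V).toAlgEquiv : Matrix n n R →ₐ[R] Matrix n n R).comp
    (diagonalAlgHom R)

lemma diagonalConj_apply (V : unitary (Matrix n n R)) (f : n → R) :
    diagonalConj V f = (V : Matrix n n R) * diagonal f * (V : Matrix n n R)ᵀ := by
  simp [diagonalConj, star_eq_conjTranspose, conjTranspose_eq_transpose_of_trivial]

lemma transpose_mul_self_of_mem_unitary {V : Matrix n n R} (hV : V ∈ unitary (Matrix n n R)) :
    Vᵀ * V = 1 := by
  simpa [star_eq_conjTranspose, conjTranspose_eq_transpose_of_trivial] using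
    Unitary.star_mul_self_of_mem hV

lemma mul_transpose_self_of_mem_unitary {V : Matrix n n R} (hV : V ∈ unitary (Matrix n n R)) :
    V * Vᵀ = 1 := by
  simpa [star_eq_conjTranspose, conjTranspose_eq_transpose_of_trivial] using
    Unitary.mul_star_self_of_mem hV

lemma mem_unitary_of_transpose_mul_self {V : Matrix n n R} (hV : Vᵀ * V = 1) :
    V ∈ unitary (Matrix n n R) := by
  refine mem_unitaryGroup_iff'.mpr ?_
  rwa [star_eq_conjTranspose, conjTranspose_eq_transpose_of_trivial]

lemma transpose_mul_diagonalConj_mul (V : unitary (Matrix n n R)) (f : n → R) :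
    (V : Matrix n n R)ᵀ * diagonalConj V f * V = diagonal f := by
  obtain ⟨W, hW⟩ := V
  rw [diagonalConj_apply, ← Matrix.mul_assoc, ← Matrix.mul_assoc,
    transpose_mul_self_of_mem_unitary hW, Matrix.one_mul, Matrix.mul_assoc,
    transpose_mul_self_of_mem_unitary hW, Matrix.mul_one]

lemma diagonalConj_transpose_mulVec_apply_eq_zero {m : Type*} [Fintype m] [LinearOrder R]
    [IsStrictOrderedRing R] {A : Matrix m n R} {V : unitary (Matrix n n R)} {lam : n → R}
    (hA : Aᵀ * A = diagonalConj V lam) {j : n} (hj : lam j = 0) (y : m → R) :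
    ((V : Matrix n n R)ᵀ *ᵥ (Aᵀ *ᵥ y)) j = 0 := by
  have hAV : ((A * (V : Matrix n n R))ᵀ * (A * (V : Matrix n n R))) j j = 0 := by
    rw [transpose_mul, Matrix.mul_assoc, ← Matrix.mul_assoc Aᵀ, hA, ← Matrix.mul_assoc,
      transpose_mul_diagonalConj_mul, diagonal_apply_eq, hj]
  rw [mulVec_mulVec, ← transpose_mul]
  exact transpose_mulVec_apply_eq_zero hAV y

end DiagonalConj

lemma euclNorm_diagonalConj_mulVec_le {d : ℕ} (V : unitary (Matrix (Fin d) (Fin d) ℝ))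
    {w v : Fin d → ℝ} {m : ℝ} (hm : 0 ≤ m)
    (hw : ∀ j, ((V : Matrix (Fin d) (Fin d) ℝ)ᵀ *ᵥ v) j ≠ 0 → |w j| ≤ m) :
    euclNorm (diagonalConj V w *ᵥ v) ≤ m * euclNorm v := by
  obtain ⟨W, hW⟩ := V
  have hWt : Wᵀᵀ * Wᵀ = 1 := by rw [transpose_transpose, mul_transpose_self_of_mem_unitary hW]
  rw [diagonalConj_apply, ← mulVec_mulVec, ← mulVec_mulVec,
    euclNorm_mulVec_of_transpose_mul_self (transpose_mul_self_of_mem_unitary hW),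
    ← euclNorm_mulVec_of_transpose_mul_self hWt v]
  exact euclNorm_diagonal_mulVec_le hm hw

lemma ipg_preconditioner_eq {𝕜 R : Type*} [CommRing 𝕜] [Ring R] [Algebra 𝕜 R] {S Kβ : R}
    {α : 𝕜} {K : ℕ → R} (hSK : S * Kβ = 1) (hK : ∀ t, K (t + 1) = K t - α • (S * K t - 1))
    (t : ℕ) : K t = Kβ + (1 - α • S) ^ t * (K 0 - Kβ) := by
  induction t with
  | zero => simp
  | succ t ih =>
    rw [hK, ih, pow_succ', mul_assoc, mul_add, hSK, sub_mul, one_mul, smul_mul_assoc]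
    module

lemma ipg_gradient_succ {m n R : Type*} [Fintype m] [Fintype n] [CommRing R]
    {A : Matrix m n R} {B : m → R} {δ : R} {K : ℕ → Matrix n n R} {x g : ℕ → n → R}
    (hg : ∀ t, g t = Aᵀ *ᵥ (A *ᵥ x t - B)) (hx : ∀ t, x (t + 1) = x t - δ • (K (t + 1) *ᵥ g t))
    (t : ℕ) : g (t + 1) = g t - δ • ((Aᵀ * A * K (t + 1)) *ᵥ g t) := by
  rw [hg (t + 1), hx, mulVec_sub A, mulVec_smul, sub_right_comm, mulVec_sub, ← hg t, mulVec_smul,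
    mulVec_mulVec, mulVec_mulVec, Matrix.mul_assoc]

theorem ipg_gradient_succ_eq_diagonalConj {m n : Type*} [Fintype m] [Fintype n] [DecidableEq n]
    {A : Matrix m n ℝ} {B : m → ℝ} {V : unitary (Matrix n n ℝ)} {lam : n → ℝ} {α β δ : ℝ}
    (hA : Aᵀ * A = diagonalConj V lam) (hlam : ∀ j, lam j + β ≠ 0)
    {K : ℕ → Matrix n n ℝ} {x g : ℕ → n → ℝ}
    (hK : ∀ t, K (t + 1) = K t - α • ((Aᵀ * A + β • 1) * K t - 1))
    (hg : ∀ t, g t = Aᵀ *ᵥ (A *ᵥ x t - B)) (hx : ∀ t, x (t + 1) = x t - δ • (K (t + 1) *ᵥ g t))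
    (t : ℕ) :
    g (t + 1) = diagonalConj V (fun j => 1 - δ * (lam j / (lam j + β))) *ᵥ g t -
      δ • (diagonalConj V (fun j => lam j * (1 - α * (lam j + β)) ^ (t + 1)) *ᵥ
        ((K 0 - (Aᵀ * A + β • 1)⁻¹) *ᵥ g t)) := by
  set φ := diagonalConj V
  have hS : Aᵀ * A + β • 1 = φ (fun j => lam j + β) := by
    rw [hA, ← map_one φ, ← map_smul, ← map_add]
    congr 1 with j
    simp
  have hSK : (Aᵀ * A + β • 1) * φ (fun j => (lam j + β)⁻¹) = 1 := by
    rw [hS, ← map_mul, ← map_one φ]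
    congr 1 with j
    simp [hlam j]
  have hH : 1 - α • (Aᵀ * A + β • 1) = φ (fun j => 1 - α * (lam j + β)) := by
    rw [hS, ← map_one φ, ← map_smul, ← map_sub]
    rfl
  have hP : φ (fun j => 1 - δ * (lam j / (lam j + β))) =
      1 - δ • (Aᵀ * A * φ (fun j => (lam j + β)⁻¹)) := by
    rw [hA, ← map_mul, ← map_smul, ← map_one φ, ← map_sub]
    rfl
  have hQ : φ (fun j => lam j * (1 - α * (lam j + β)) ^ (t + 1)) =
      Aᵀ * A * φ (fun j => 1 - α * (lam j + β)) ^ (t + 1) := by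
    rw [hA, ← map_pow, ← map_mul]
    rfl
  rw [ipg_gradient_succ hg hx, ipg_preconditioner_eq hSK hK (t + 1), inv_eq_right_inv hSK, hH,
    hP, hQ, mul_add, add_mulVec, sub_mulVec, one_mulVec, smul_mulVec, smul_add, sub_sub]
  simp only [mulVec_mulVec, Matrix.mul_assoc]

theorem ipg_gradient_norm_succ_le {m d : ℕ} {A : Matrix (Fin m) (Fin d) ℝ} {B : Fin m → ℝ}
    {V : unitary (Matrix (Fin d) (Fin d) ℝ)} {lam : Fin d → ℝ} {α β δ μ c : ℝ}
    (hA : Aᵀ * A = diagonalConj V lam) (hlam : ∀ j, lam j + β ≠ 0)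
    {K : ℕ → Matrix (Fin d) (Fin d) ℝ} {x g : ℕ → Fin d → ℝ}
    (hK : ∀ t, K (t + 1) = K t - α • ((Aᵀ * A + β • 1) * K t - 1))
    (hg : ∀ t, g t = Aᵀ *ᵥ (A *ᵥ x t - B)) (hx : ∀ t, x (t + 1) = x t - δ • (K (t + 1) *ᵥ g t))
    (t : ℕ) (hδ : 0 ≤ δ) (hμ : 0 ≤ μ) (hc : 0 ≤ c)
    (hμ_bound : ∀ j, lam j ≠ 0 → |1 - δ * (lam j / (lam j + β))| ≤ μ)
    (hc_bound : ∀ j, |lam j * (1 - α * (lam j + β)) ^ (t + 1)| ≤ c) :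
    euclNorm (g (t + 1)) ≤ (μ + δ * c * frob (K 0 - (Aᵀ * A + β • 1)⁻¹)) * euclNorm (g t) := by
  rw [ipg_gradient_succ_eq_diagonalConj hA hlam hK hg hx t]
  have hfirst := euclNorm_diagonalConj_mulVec_le (v := g t) V hμ fun j hj => hμ_bound j fun hj0 =>
    hj (by rw [hg t]; exact diagonalConj_transpose_mulVec_apply_eq_zero hA hj0 _)
  have hsecond := (euclNorm_diagonalConj_mulVec_le V hc fun j _ => hc_bound j).trans
    (mul_le_mul_of_nonneg_left (euclNorm_mulVec_le_frob (K 0 - (Aᵀ * A + β • 1)⁻¹) (g t)) hc)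
  calc _ ≤ _ := euclNorm_sub_le _ _
    _ ≤ μ * euclNorm (g t) + δ * (c * (frob (K 0 - (Aᵀ * A + β • 1)⁻¹) * euclNorm (g t))) := by
      rw [euclNorm_smul, abs_of_nonneg hδ]
      exact add_le_add hfirst (mul_le_mul_of_nonneg_left hsecond hδ)
    _ = _ := by ring

lemma abs_one_sub_two_div_add_mul_le {a b s : ℝ} (ha : 0 < a) (has : a ≤ s) (hsb : s ≤ b) :
    |1 - 2 / (b + a) * s| ≤ (b - a) / (b + a) := by
  have hab : 0 < b + a := by linarith
  rw [show 1 - 2 / (b + a) * s = (b + a - 2 * s) / (b + a) by field_simp, abs_div,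
    abs_of_pos hab]
  gcongr
  exact abs_le.mpr ⟨by linarith, by linarith⟩

lemma div_add_le_div_add {a b β : ℝ} (hβ : 0 ≤ β) (ha : 0 < a + β) (hab : a ≤ b) :
    a / (a + β) ≤ b / (b + β) := by
  rw [div_le_div_iff₀ ha (by linarith)]
  nlinarith [mul_le_mul_of_nonneg_right hab hβ]

lemma abs_one_sub_optimal_step_le {a b s β : ℝ} (hβ : 0 < β) (ha : 0 < a) (has : a ≤ s)
    (hsb : s ≤ b) :
    |1 - 2 / (b / (b + β) + a / (a + β)) * (s / (s + β))| ≤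
      (b - a) / (b + a + 2 * (b * a / β)) := by
  have hb : 0 < b := ha.trans_le (has.trans hsb)
  have hratio : (b / (b + β) - a / (a + β)) / (b / (b + β) + a / (a + β)) =
      (b - a) / (b + a + 2 * (b * a / β)) := by
    field_simp
    ring
  rw [← hratio]
  exact abs_one_sub_two_div_add_mul_le (by positivity)
    (div_add_le_div_add hβ.le (by linarith) has) (div_add_le_div_add hβ.le (by linarith) hsb)

lemma exists_contraction_rate {α β lo hi : ℝ} (hβ : 0 < β) (hlo : 0 ≤ lo) (hle : lo ≤ hi)
    (hα0 : 0 < α) (hα : α < 2 / (hi + β)) :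
    ∃ ρ, (hi - lo) / (hi + lo + 2 * β) ≤ ρ ∧ ρ < 1 ∧
      ∀ x, lo ≤ x → x ≤ hi → |1 - α * (x + β)| ≤ ρ := by
  have hαhi : α * (hi + β) < 2 := (lt_div_iff₀ (by linarith)).mp hα
  have hlt : ∀ x, lo ≤ x → x ≤ hi → |1 - α * (x + β)| < 1 := fun x hx hx' => by
    rw [abs_sub_lt_iff]
    constructor <;> nlinarith
  refine ⟨max ((hi - lo) / (hi + lo + 2 * β)) (max |1 - α * (hi + β)| |1 - α * (lo + β)|),
    le_max_left _ _, max_lt ?_ (max_lt (hlt hi hle le_rfl) (hlt lo le_rfl hle)), ?_⟩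
  · rw [div_lt_one (by linarith)]
    linarith
  · intro x hx hx'
    refine le_max_of_le_right (abs_le_max_abs_abs ?_ ?_) <;> nlinarith

/-- Theorem 1(i) with optimal step-size: with
`δ = 2/(λ₁/(λ₁+β) + λ_r/(λ_r+β))`, the gradients of the IPG method satisfy
`‖g(t+1)‖ ≤ (μ* + δ λ₁ ‖K(0) − K_β‖_F ρ^{t+1}) ‖g(t)‖` with `ϱ ≤ ρ < 1`. -/
theorem ipg_gradient_contraction_optimal_stepsize
    (n d : ℕ) (hd : 0 < d)
    (A : Matrix (Fin n) (Fin d) ℝ) (B : Fin n → ℝ)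
    (lam : Fin d → ℝ) (V : Matrix (Fin d) (Fin d) ℝ)
    (hV : Vᵀ * V = 1)
    (hdiag : Aᵀ * A = V * Matrix.diagonal lam * Vᵀ)
    (hanti : Antitone lam)
    (r : ℕ) (hrd : r ≤ d)
    (hlamr : 0 < lam ⟨r - 1, by omega⟩)
    (hzero : ∀ j : Fin d, r ≤ (j : ℕ) → lam j = 0)
    (α β δ : ℝ) (hβ : 0 < β)
    (hα0 : 0 < α) (hα : α < 2 / (lam ⟨0, hd⟩ + β))
    (hδ : δ = 2 / (lam ⟨0, hd⟩ / (lam ⟨0, hd⟩ + β) +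
        lam ⟨r - 1, by omega⟩ / (lam ⟨r - 1, by omega⟩ + β)))
    (K : ℕ → Matrix (Fin d) (Fin d) ℝ)
    (hK : ∀ t, K (t + 1) = K t - α • ((Aᵀ * A + β • 1) * K t - 1))
    (x : ℕ → Fin d → ℝ) (g : ℕ → Fin d → ℝ)
    (hg : ∀ t, g t = Aᵀ.mulVec (A.mulVec (x t) - B))
    (hx : ∀ t, x (t + 1) = x t - δ • (K (t + 1)).mulVec (g t)) :
    ∃ ρ : ℝ,
      (lam ⟨0, hd⟩ - lam ⟨d - 1, by omega⟩) /
          (lam ⟨0, hd⟩ + lam ⟨d - 1, by omega⟩ + 2 * β) ≤ ρ ∧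
      ρ < 1 ∧
      ∀ t : ℕ,
        euclNorm (g (t + 1)) ≤
          ((lam ⟨0, hd⟩ - lam ⟨r - 1, by omega⟩) /
              (lam ⟨0, hd⟩ + lam ⟨r - 1, by omega⟩ +
                2 * (lam ⟨0, hd⟩ * lam ⟨r - 1, by omega⟩ / β)) +
            δ * lam ⟨0, hd⟩ * frob (K 0 - (Aᵀ * A + β • 1)⁻¹) * ρ ^ (t + 1)) *
            euclNorm (g t) := by
  set U : unitary (Matrix (Fin d) (Fin d) ℝ) := ⟨V, mem_unitary_of_transpose_mul_self hV⟩
  have hA : Aᵀ * A = diagonalConj U lam := by rw [hdiag, diagonalConj_apply]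
  have hlam_le : ∀ j, lam j ≤ lam ⟨0, hd⟩ := fun j => hanti (Nat.zero_le _)
  have hlam_ge : ∀ j : Fin d, (j : ℕ) < r → lam ⟨r - 1, by omega⟩ ≤ lam j := fun j hj =>
    hanti (by rw [Fin.le_def]; dsimp only; omega)
  have hlam_nonneg : ∀ j, 0 ≤ lam j := fun j => by
    rcases lt_or_ge (j : ℕ) r with hj | hj
    · exact hlamr.le.trans (hlam_ge j hj)
    · exact (hzero j hj).ge
  have hlam_last : ∀ j : Fin d, lam ⟨d - 1, by omega⟩ ≤ lam j := fun j =>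
    hanti (by rw [Fin.le_def]; dsimp only; omega)
  obtain ⟨ρ, hϱρ, hρ1, hρ⟩ :=
    exists_contraction_rate hβ (hlam_nonneg _) (hlam_le _) hα0 hα
  refine ⟨ρ, hϱρ, hρ1, fun t => ?_⟩
  have hδ0 : 0 ≤ δ := by
    have := hlam_nonneg ⟨0, hd⟩
    rw [hδ]
    positivity
  have hρ0 : 0 ≤ ρ := (abs_nonneg _).trans (hρ _ le_rfl (hlam_last ⟨0, hd⟩))
  have hμ0 := (abs_nonneg _).trans
    (abs_one_sub_optimal_step_le hβ hlamr le_rfl (hlam_le ⟨r - 1, by omega⟩))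
  refine (ipg_gradient_norm_succ_le (c := lam ⟨0, hd⟩ * ρ ^ (t + 1)) hA
    (fun j => by linarith [hlam_nonneg j]) hK hg hx t hδ0 hμ0
    (mul_nonneg (hlam_nonneg _) (pow_nonneg hρ0 _)) (fun j hj => ?_)
    (fun j => ?_)).trans_eq (by ring)
  · have hjr : (j : ℕ) < r := not_le.mp fun hjr => hj (hzero j hjr)
    rw [hδ]
    exact abs_one_sub_optimal_step_le hβ hlamr (hlam_ge j hjr) (hlam_le j)
  · rw [abs_mul, abs_pow, abs_of_nonneg (hlam_nonneg j)]
    exact mul_le_mul (hlam_le j) (pow_le_pow_left₀ (abs_nonneg _)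
      (hρ _ (hlam_last j) (hlam_le j)) _) (by positivity) (hlam_nonneg _)
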